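/- arXiv:1411.6236 — 2 statements merged into one kernel-verified Lean document; each statement's English description precedes it below -/
import Mathlib

section
/- Let i : (D,d₀) → (E,e₀), f : (D,d₀) → (A,a₀), g : (E,e₀) → (B,b₀) and j : (A,a₀) → (B,b₀) be pointed continuous maps between topological spaces, and let H : D × [0,1] → B be a pointed homotopy with H(·,0) = g∘i, H(·,1) = j∘f and H(d₀,t) = b₀ for all t. For d ∈ D write H_d for the path t ↦ H(d,t) and H̄_d for its reverse t ↦ H(d,1−t). Define α : Ff → Fg by α(d,q) = (i(d), (j∘q)·H̄_d) and β : Fi → Fj by β(d,p) = (f(d), (g∘p)·H_d); these are well-defined pointed continuous maps between the homotopy fibres. Then for every m ≥ 0 there is an isomorphism π_m(Fβ) ≅ π_m(Fα) (a bijection of pointed sets for m = 0 and a group isomorphism for m ≥ 1), where Fα and Fβ denote the homotopy fibres of α and β respectively. -/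
open unitInterval Topology

/-- The homotopy fibre of a (pointed) map `f : X → Y` over the point `y₀ : Y`. -/
abbrev HomotopyFibre {X Y : Type} [TopologicalSpace X] [TopologicalSpace Y]
    (f : X → Y) (y₀ : Y) : Type :=
  {z : X × C(I, Y) // z.2 0 = y₀ ∧ z.2 1 = f z.1}

/-- The basepoint of the homotopy fibre: `(x₀, constant path at y₀)`. -/
def HomotopyFibre.pt {X Y : Type} [TopologicalSpace X] [TopologicalSpace Y]
    (f : X → Y) {x₀ : X} {y₀ : Y} (hf : f x₀ = y₀) : HomotopyFibre f y₀ :=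
  ⟨(x₀, ContinuousMap.const I y₀), rfl, hf.symm⟩

/-- The path from `y₀` to `f z.1.1` carried by a point of the homotopy fibre. -/
def pathOf {X Y : Type} [TopologicalSpace X] [TopologicalSpace Y] {f : X → Y} {y₀ : Y}
    (z : HomotopyFibre f y₀) : Path y₀ (f z.1.1) :=
  ⟨z.1.2, z.2.1, z.2.2⟩

section Maps

variable {D A E B : Type} [TopologicalSpace D] [TopologicalSpace A]
  [TopologicalSpace E] [TopologicalSpace B]

/-- The path `H_d : t ↦ H(d,t)` from `g(i d)` to `j(f d)`. -/
def Hpath (i : C(D, E)) (f : C(D, A)) (g : C(E, B)) (j : C(A, B)) (H : C(D × I, B))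
    (h0 : ∀ d, H (d, 0) = g (i d)) (h1 : ∀ d, H (d, 1) = j (f d)) (d : D) :
    Path (g (i d)) (j (f d)) :=
  ⟨H.comp ⟨fun t => (d, t), by fun_prop⟩, h0 d, h1 d⟩

/-- The map `α : Ff → Fg`, `(d, q) ↦ (i d, (j ∘ q) · H̄_d)`. -/
noncomputable def alphaMap (i : C(D, E)) (f : C(D, A)) (g : C(E, B)) (j : C(A, B)) {a₀ : A} {b₀ : B}
    (hja : j a₀ = b₀) (H : C(D × I, B))
    (h0 : ∀ d, H (d, 0) = g (i d)) (h1 : ∀ d, H (d, 1) = j (f d))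
    (z : HomotopyFibre (⇑f) a₀) : HomotopyFibre (⇑g) b₀ :=
  let P : Path b₀ (g (i z.1.1)) :=
    (((pathOf z).map j.continuous).cast hja.symm rfl).trans
      (Hpath i f g j H h0 h1 z.1.1).symm
  ⟨(i z.1.1, P.toContinuousMap), P.source, P.target⟩

/-- The map `β : Fi → Fj`, `(d, p) ↦ (f d, (g ∘ p) · H_d)`. -/
noncomputable def betaMap (i : C(D, E)) (f : C(D, A)) (g : C(E, B)) (j : C(A, B)) {e₀ : E} {b₀ : B}
    (hge : g e₀ = b₀) (H : C(D × I, B))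
    (h0 : ∀ d, H (d, 0) = g (i d)) (h1 : ∀ d, H (d, 1) = j (f d))
    (z : HomotopyFibre (⇑i) e₀) : HomotopyFibre (⇑j) b₀ :=
  let P : Path b₀ (j (f z.1.1)) :=
    (((pathOf z).map g.continuous).cast hge.symm rfl).trans
      (Hpath i f g j H h0 h1 z.1.1)
  ⟨(f z.1.1, P.toContinuousMap), P.source, P.target⟩


namespace Stmt4Aux
open Topology.Homotopy


lemma mem_I {x : ℝ} (h0 : 0 ≤ x) (h1 : x ≤ 1) : x ∈ I := ⟨h0, h1⟩

noncomputable def phi : C(I × I, I × I) where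
  toFun p :=
    (⟨min (2 * (p.2 : ℝ)) (max (p.1 : ℝ) (p.2 : ℝ)),
       mem_I (le_min (by have := p.2.2.1; linarith) (le_max_of_le_left p.1.2.1))
         ((min_le_right _ _).trans (max_le p.1.2.2 p.2.2.2))⟩,
     ⟨max ((p.1 : ℝ) / 2) (min (p.1 : ℝ) (3 * (p.1 : ℝ) / 2 - (p.2 : ℝ))),
       mem_I (le_max_of_le_left (by have := p.1.2.1; linarith))
         (max_le (by have := p.1.2.2; linarith) ((min_le_left _ _).trans p.1.2.2))⟩)
  continuous_toFun := by
    apply Continuous.prodMk <;> apply Continuous.subtype_mk <;> fun_prop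

lemma phi_fst (p : I × I) :
    ((phi p).1 : ℝ) = min (2 * (p.2 : ℝ)) (max (p.1 : ℝ) (p.2 : ℝ)) := rfl

lemma phi_snd (p : I × I) :
    ((phi p).2 : ℝ) = max ((p.1 : ℝ) / 2) (min (p.1 : ℝ) (3 * (p.1 : ℝ) / 2 - (p.2 : ℝ))) := rfl

lemma real_invol (u v : ℝ) (hu0 : 0 ≤ u) (hu1 : u ≤ 1) (hv0 : 0 ≤ v) (hv1 : v ≤ 1) :
    min (2 * (max (u/2) (min u (3*u/2 - v))))
        (max (min (2*v) (max u v)) (max (u/2) (min u (3*u/2 - v)))) = u ∧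
    max ((min (2*v) (max u v))/2)
        (min (min (2*v) (max u v)) (3*(min (2*v) (max u v))/2 - (max (u/2) (min u (3*u/2 - v))))) = v := by
  rcases le_total (2*v) u with h | h
  · rw [max_eq_left (by linarith : v ≤ u), min_eq_left h,
      min_eq_left (by linarith : u ≤ 3*u/2 - v), max_eq_right (by linarith : u/2 ≤ u),
      max_eq_right h, min_eq_right (by linarith : u ≤ 2*u),
      min_eq_right (by linarith : 3*(2*v)/2 - u ≤ 2*v), max_eq_left (by linarith)]
    constructor <;> linarith
  · rcases le_total v u with h2 | h2
    · rw [max_eq_left h2, min_eq_right h, min_eq_right (by linarith : 3*u/2 - v ≤ u),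
        max_eq_right (by linarith : u/2 ≤ 3*u/2 - v), max_eq_left (by linarith : 3*u/2 - v ≤ u),
        min_eq_right (by linarith : u ≤ 2*(3*u/2 - v)),
        min_eq_right (by linarith : 3*u/2 - (3*u/2 - v) ≤ u),
        max_eq_right (by linarith : u/2 ≤ 3*u/2 - (3*u/2 - v))]
      constructor <;> linarith
    · rw [max_eq_right h2, min_eq_right (by linarith : v ≤ 2*v),
        min_eq_right (by linarith : 3*u/2 - v ≤ u), max_eq_left (by linarith : 3*u/2 - v ≤ u/2),
        max_eq_left (by linarith : u/2 ≤ v), min_eq_left (by linarith : 2*(u/2) ≤ v),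
        min_eq_left (by linarith : v ≤ 3*v/2 - u/2), max_eq_right (by linarith : v/2 ≤ v)]
      constructor <;> linarith

lemma phi_invol (p : I × I) : phi (phi p) = p := by
  have h := real_invol p.1 p.2 p.1.2.1 p.1.2.2 p.2.2.1 p.2.2.2
  ext
  · rw [phi_fst, phi_snd, phi_fst]; exact h.1
  · rw [phi_snd, phi_fst, phi_snd]; exact h.2

lemma phi_bottom (t : I) : phi (t, 0) = (0, t) := by
  have ht0 := t.2.1; have ht1 := t.2.2
  ext
  · rw [phi_fst]
    show min (2*(0:ℝ)) (max (t:ℝ) 0) = 0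
    rw [max_eq_left ht0, min_eq_left (by linarith)]; ring
  · rw [phi_snd]
    show max ((t:ℝ)/2) (min (t:ℝ) (3*(t:ℝ)/2 - 0)) = t
    rw [min_eq_left (by linarith), max_eq_right (by linarith)]

lemma phi_left (v : I) : phi (0, v) = (v, 0) := by
  have hv0 := v.2.1
  ext
  · rw [phi_fst]
    show min (2*(v:ℝ)) (max 0 (v:ℝ)) = v
    rw [max_eq_right hv0, min_eq_right (by linarith)]
  · rw [phi_snd]
    show max ((0:ℝ)/2) (min 0 (3*(0:ℝ)/2 - v)) = 0
    rw [min_eq_right (by linarith), max_eq_left (by linarith)]; norm_num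

lemma phi_top (t : I) :
    phi (t, 1) = (1, ⟨(t:ℝ)/2, mem_I (by have := t.2.1; linarith) (by have := t.2.2; linarith)⟩) := by
  have ht0 := t.2.1; have ht1 := t.2.2
  ext
  · rw [phi_fst]
    show min (2*(1:ℝ)) (max (t:ℝ) 1) = 1
    rw [max_eq_right ht1, min_eq_right (by linarith)]
  · rw [phi_snd]
    show max ((t:ℝ)/2) (min (t:ℝ) (3*(t:ℝ)/2 - 1)) = (t:ℝ)/2
    rw [min_eq_right (by linarith), max_eq_left (by linarith)]

lemma phi_right_le (v : I) (h : (v:ℝ) ≤ 1/2) :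
    phi (1, v) = (⟨2*(v:ℝ), mem_I (by have := v.2.1; linarith) (by linarith)⟩, 1) := by
  have hv0 := v.2.1
  ext
  · rw [phi_fst]
    show min (2*(v:ℝ)) (max 1 (v:ℝ)) = 2*(v:ℝ)
    rw [max_eq_left v.2.2, min_eq_left (by linarith)]
  · rw [phi_snd]
    show max ((1:ℝ)/2) (min 1 (3*(1:ℝ)/2 - v)) = 1
    rw [min_eq_left (by linarith), max_eq_right (by linarith)]

lemma phi_right_ge (v : I) (h : 1/2 ≤ (v:ℝ)) :
    phi (1, v) = (1, ⟨3/2 - (v:ℝ), mem_I (by have := v.2.2; linarith) (by linarith)⟩) := by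
  have hv1 := v.2.2
  ext
  · rw [phi_fst]
    show min (2*(v:ℝ)) (max 1 (v:ℝ)) = 1
    rw [max_eq_left v.2.2, min_eq_right (by linarith)]
  · rw [phi_snd]
    show max ((1:ℝ)/2) (min 1 (3*(1:ℝ)/2 - v)) = 3/2 - (v:ℝ)
    rw [min_eq_right (by linarith), max_eq_right (by linarith)]; ring



variable {N : Type} {X Y : Type} [TopologicalSpace X] [TopologicalSpace Y] {x₀ : X} {y₀ : Y}

/-- Composition of a generalized loop with a pointed map. -/
def gMap (φ : C(X, Y)) (hφ : φ x₀ = y₀) (f : Ω^ N X x₀) : Ω^ N Y y₀ :=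
  ⟨φ.comp f.1, fun y hy => by
    rw [ContinuousMap.comp_apply]
    rw [show f.1 y = x₀ from f.2 y hy, hφ]⟩

lemma gMap_apply (φ : C(X, Y)) (hφ : φ x₀ = y₀) (f : Ω^ N X x₀) (y : I^N) :
    gMap φ hφ f y = φ (f y) := rfl

lemma gMap_homotopic (φ : C(X, Y)) (hφ : φ x₀ = y₀) {f g : Ω^ N X x₀}
    (h : GenLoop.Homotopic f g) : GenLoop.Homotopic (gMap φ hφ f) (gMap φ hφ g) :=
  h.map fun F => F.compContinuousMap φ

/-- Induced map on homotopy groups. -/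
def piMap (φ : C(X, Y)) (hφ : φ x₀ = y₀) :
    HomotopyGroup N X x₀ → HomotopyGroup N Y y₀ :=
  Quotient.map (gMap φ hφ) fun _ _ h => gMap_homotopic φ hφ h

lemma piMap_mk (φ : C(X, Y)) (hφ : φ x₀ = y₀) (f : Ω^ N X x₀) :
    piMap φ hφ ⟦f⟧ = ⟦gMap φ hφ f⟧ := rfl

lemma gMap_const (φ : C(X, Y)) (hφ : φ x₀ = y₀) :
    gMap φ hφ (GenLoop.const (N := N)) = GenLoop.const :=
  GenLoop.ext _ _ fun _ => hφ

lemma piMap_const (φ : C(X, Y)) (hφ : φ x₀ = y₀) :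
    piMap φ hφ (⟦GenLoop.const⟧ : HomotopyGroup N X x₀) = ⟦GenLoop.const⟧ := by
  rw [piMap_mk, gMap_const]

lemma gMap_transAt [DecidableEq N] (φ : C(X, Y)) (hφ : φ x₀ = y₀) (i : N) (f g : Ω^ N X x₀) :
    gMap φ hφ (GenLoop.transAt i f g) =
      GenLoop.transAt i (gMap φ hφ f) (gMap φ hφ g) := by
  apply GenLoop.ext; intro y
  show φ ((GenLoop.transAt i f g) y) = (GenLoop.transAt i _ _) y
  simp only [GenLoop.transAt, GenLoop.coe_copy]
  split_ifs <;> rfl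

lemma piMap_mul [DecidableEq N] [Nonempty N] (φ : C(X, Y)) (hφ : φ x₀ = y₀)
    (a b : HomotopyGroup N X x₀) :
    piMap φ hφ (a * b) = piMap φ hφ a * piMap φ hφ b := by
  induction a using Quotient.inductionOn with | _ p => ?_
  induction b using Quotient.inductionOn with | _ q => ?_
  have i := Classical.arbitrary N
  have h1 := HomotopyGroup.mul_spec (x := x₀) (i := i) (p := p) (q := q)
  have h2 := HomotopyGroup.mul_spec (x := y₀) (i := i) (p := gMap φ hφ p) (q := gMap φ hφ q)
  beta_reduce at h1 h2
  rw [h1, piMap_mk, piMap_mk, piMap_mk, h2, gMap_transAt]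

/-- Bijection of homotopy groups from a pointed continuous two-sided inverse pair. -/
def piEquivOfMaps (φ : C(X, Y)) (ψ : C(Y, X)) (hφ : φ x₀ = y₀) (hψ : ψ y₀ = x₀)
    (h1 : ∀ x, ψ (φ x) = x) (h2 : ∀ y, φ (ψ y) = y) :
    HomotopyGroup N X x₀ ≃ HomotopyGroup N Y y₀ where
  toFun := piMap φ hφ
  invFun := piMap ψ hψ
  left_inv a := by
    induction a using Quotient.inductionOn with | _ f => ?_
    rw [piMap_mk, piMap_mk]
    exact congrArg _ (GenLoop.ext _ _ fun y => h1 (f y))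
  right_inv a := by
    induction a using Quotient.inductionOn with | _ f => ?_
    rw [piMap_mk, piMap_mk]
    exact congrArg _ (GenLoop.ext _ _ fun y => h2 (f y))


variable {D A E B : Type} [TopologicalSpace D] [TopologicalSpace A]
  [TopologicalSpace E] [TopologicalSpace B]


lemma I_ext {a b : I} (h : (a : ℝ) = b) : a = b := Subtype.ext h

lemma betaMap_snd_apply (i : C(D, E)) (f : C(D, A)) (g : C(E, B)) (j : C(A, B)) {e₀ : E} {b₀ : B}
    (hge : g e₀ = b₀) (H : C(D × I, B)) (h0 : ∀ d, H (d, 0) = g (i d))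
    (h1 : ∀ d, H (d, 1) = j (f d)) (z : HomotopyFibre (⇑i) e₀) (t : I) :
    (betaMap i f g j hge H h0 h1 z).1.2 t =
      if h : (t : ℝ) ≤ 1 / 2 then g (z.1.2 ⟨2 * t, (mul_pos_mem_iff zero_lt_two).2 ⟨t.2.1, h⟩⟩)
      else H (z.1.1, ⟨2 * t - 1, two_mul_sub_one_mem_iff.2 ⟨(not_le.1 h).le, t.2.2⟩⟩) := by
  show ((((pathOf z).map g.continuous).cast hge.symm rfl).trans
      (Hpath i f g j H h0 h1 z.1.1)) t = _
  rw [Path.trans_apply]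
  split_ifs with h <;> rfl

lemma alphaMap_snd_apply (i : C(D, E)) (f : C(D, A)) (g : C(E, B)) (j : C(A, B)) {a₀ : A} {b₀ : B}
    (hja : j a₀ = b₀) (H : C(D × I, B)) (h0 : ∀ d, H (d, 0) = g (i d))
    (h1 : ∀ d, H (d, 1) = j (f d)) (z : HomotopyFibre (⇑f) a₀) (t : I) :
    (alphaMap i f g j hja H h0 h1 z).1.2 t =
      if h : (t : ℝ) ≤ 1 / 2 then j (z.1.2 ⟨2 * t, (mul_pos_mem_iff zero_lt_two).2 ⟨t.2.1, h⟩⟩)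
      else H (z.1.1, σ ⟨2 * t - 1, two_mul_sub_one_mem_iff.2 ⟨(not_le.1 h).le, t.2.2⟩⟩) := by
  show ((((pathOf z).map j.continuous).cast hja.symm rfl).trans
      (Hpath i f g j H h0 h1 z.1.1).symm) t = _
  rw [Path.trans_apply]
  split_ifs with h <;> rfl

/-- The square associated to a path into a homotopy fibre. -/
def sqMap {X Y : Type} [TopologicalSpace X] [TopologicalSpace Y] {F : X → Y} {y₀ : Y}
    (Q : C(I, HomotopyFibre F y₀)) : C(I × I, Y) :=
  ContinuousMap.uncurry ⟨fun u => (Q u).1.2, by fun_prop⟩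

lemma fiber_path_congr {X Y : Type} [TopologicalSpace X] [TopologicalSpace Y] {F : X → Y}
    {y₀ : Y} {w w' : HomotopyFibre F y₀} (h : w = w') (t : I) : w.1.2 t = w'.1.2 t := by rw [h]

lemma sqMap_apply {X Y : Type} [TopologicalSpace X] [TopologicalSpace Y] {F : X → Y} {y₀ : Y}
    (Q : C(I, HomotopyFibre F y₀)) (p : I × I) : sqMap Q p = (Q p.1).1.2 p.2 := rfl

set_option maxHeartbeats 2000000 in
/-- The transfer map from the homotopy fibre of `β` to the homotopy fibre of `α`. -/
noncomputable def Tmap (i : C(D, E)) (f : C(D, A)) (g : C(E, B)) (j : C(A, B))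
    {e₀ : E} {a₀ : A} {b₀ : B}
    (hge : g e₀ = b₀) (hja : j a₀ = b₀) (H : C(D × I, B))
    (h0 : ∀ d, H (d, 0) = g (i d)) (h1 : ∀ d, H (d, 1) = j (f d))
    (x : HomotopyFibre (betaMap i f g j hge H h0 h1) (HomotopyFibre.pt (⇑j) hja)) :
    HomotopyFibre (alphaMap i f g j hja H h0 h1) (HomotopyFibre.pt (⇑g) hge) :=
  ⟨(⟨(x.1.1.1.1, ⟨fun u => (x.1.2 u).1.1, by fun_prop⟩),
      by show (x.1.2 0).1.1 = a₀; rw [x.2.1]; rfl,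
      by show (x.1.2 1).1.1 = f x.1.1.1.1; rw [x.2.2]; rfl⟩,
    ⟨fun t => ⟨(x.1.1.1.2 t, ((sqMap x.1.2).comp phi).curry t),
      by
        show sqMap x.1.2 (phi (t, 0)) = b₀
        rw [phi_bottom]
        show (x.1.2 0).1.2 t = b₀
        rw [x.2.1]; rfl,
      by
        show sqMap x.1.2 (phi (t, 1)) = g (x.1.1.1.2 t)
        rw [phi_top]
        show (x.1.2 1).1.2 _ = g (x.1.1.1.2 t)
        rw [x.2.2, betaMap_snd_apply]
        rw [dif_pos (show ((⟨(t:ℝ)/2, _⟩ : I) : ℝ) ≤ 1/2 by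
          show (t:ℝ)/2 ≤ 1/2; have := t.2.2; linarith)]
        exact congrArg g (congrArg _ (I_ext (show 2*((t:ℝ)/2) = t by ring)))⟩,
      by
        apply Continuous.subtype_mk
        exact (map_continuous x.1.1.1.2).prodMk (map_continuous ((sqMap x.1.2).comp phi).curry)⟩),
   by
    apply Subtype.ext
    refine Prod.ext x.1.1.2.1 (ContinuousMap.ext fun v => ?_)
    show sqMap x.1.2 (phi (0, v)) = b₀
    rw [phi_left]
    exact (x.1.2 v).2.1,
   by
    apply Subtype.ext
    refine Prod.ext x.1.1.2.2 (ContinuousMap.ext fun v => ?_)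
    rw [alphaMap_snd_apply]
    rcases le_or_gt (v : ℝ) (1/2) with h | h
    · rw [dif_pos h]
      show sqMap x.1.2 (phi (1, v)) = _
      rw [phi_right_le v h]
      show (x.1.2 ⟨2*(v:ℝ), _⟩).1.2 1 = _
      rw [(x.1.2 ⟨2*(v:ℝ), _⟩).2.2]
      rfl
    · rw [dif_neg (not_le.mpr h)]
      show sqMap x.1.2 (phi (1, v)) = _
      rw [phi_right_ge v h.le]
      show (x.1.2 1).1.2 ⟨3/2 - (v:ℝ), _⟩ = _
      rw [fiber_path_congr x.2.2, betaMap_snd_apply]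
      rcases eq_or_lt_of_le v.2.2 with h1 | h1
      · have hv : v = 1 := I_ext h1
        subst hv
        rw [dif_pos (show 3/2 - ((1:I):ℝ) ≤ 1/2 by rw [Set.Icc.coe_one]; norm_num)]
        trans g (x.1.1.1.2 1)
        · exact congrArg g (congrArg _ (I_ext (show 2*(3/2 - ((1:I):ℝ)) = ((1:I):ℝ) by
            rw [Set.Icc.coe_one]; norm_num)))
        · rw [x.1.1.2.2, ← h0]
          refine congrArg H (Prod.ext rfl (I_ext ?_))
          rw [coe_symm_eq]
          show ((0:I):ℝ) = 1 - (2*((1:I):ℝ) - 1)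
          rw [Set.Icc.coe_one, Set.Icc.coe_zero]; norm_num
      · rw [dif_neg (show ¬ ((⟨3/2 - (v:ℝ), _⟩ : I) : ℝ) ≤ 1/2 by
          show ¬ (3/2 - (v:ℝ) ≤ 1/2); push_neg; linarith)]
        refine congrArg H (Prod.ext rfl (I_ext ?_))
        show 2 * (3/2 - (v:ℝ)) - 1 = 1 - (2*(v:ℝ) - 1)
        ring⟩



/-- Reversal of the homotopy `H`. -/
def Hrev (H : C(D × I, B)) : C(D × I, B) := H.comp ⟨fun q => (q.1, σ q.2), by fun_prop⟩

lemma Hrev_h0 (i : C(D, E)) (f : C(D, A)) (g : C(E, B)) (j : C(A, B)) (H : C(D × I, B))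
    (h1 : ∀ d, H (d, 1) = j (f d)) : ∀ d, Hrev H (d, 0) = j (f d) := fun d => by
  show H (d, σ 0) = _; rw [symm_zero]; exact h1 d

lemma Hrev_h1 (i : C(D, E)) (f : C(D, A)) (g : C(E, B)) (j : C(A, B)) (H : C(D × I, B))
    (h0 : ∀ d, H (d, 0) = g (i d)) : ∀ d, Hrev H (d, 1) = g (i d) := fun d => by
  show H (d, σ 1) = _; rw [symm_one]; exact h0 d

lemma beta_swap (i : C(D, E)) (f : C(D, A)) (g : C(E, B)) (j : C(A, B)) {a₀ : A} {b₀ : B}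
    (hja : j a₀ = b₀) (H : C(D × I, B))
    (h0 : ∀ d, H (d, 0) = g (i d)) (h1 : ∀ d, H (d, 1) = j (f d)) :
    betaMap f i j g hja (Hrev H) (Hrev_h0 i f g j H h1) (Hrev_h1 i f g j H h0) =
      alphaMap i f g j hja H h0 h1 := by
  funext z
  apply Subtype.ext
  refine Prod.ext rfl (ContinuousMap.ext fun t => ?_)
  rw [betaMap_snd_apply, alphaMap_snd_apply]
  split_ifs with h <;> rfl

lemma alpha_swap (i : C(D, E)) (f : C(D, A)) (g : C(E, B)) (j : C(A, B)) {e₀ : E} {b₀ : B}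
    (hge : g e₀ = b₀) (H : C(D × I, B))
    (h0 : ∀ d, H (d, 0) = g (i d)) (h1 : ∀ d, H (d, 1) = j (f d)) :
    alphaMap f i j g hge (Hrev H) (Hrev_h0 i f g j H h1) (Hrev_h1 i f g j H h0) =
      betaMap i f g j hge H h0 h1 := by
  funext z
  apply Subtype.ext
  refine Prod.ext rfl (ContinuousMap.ext fun t => ?_)
  rw [betaMap_snd_apply, alphaMap_snd_apply]
  split_ifs with h
  · rfl
  · show H (z.1.1, σ (σ _)) = H (z.1.1, _)
    rw [symm_symm]

/-- Transport a point of a homotopy fibre along a pointwise equality of maps. -/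
def reindex {X Y : Type} [TopologicalSpace X] [TopologicalSpace Y] {F G : X → Y} {y₀ : Y}
    (h : ∀ z, F z = G z) (w : HomotopyFibre F y₀) : HomotopyFibre G y₀ :=
  ⟨w.1, w.2.1, w.2.2.trans (h w.1.1)⟩

/-- The transfer map from the homotopy fibre of `α` to the homotopy fibre of `β`. -/
noncomputable def Tmap2 (i : C(D, E)) (f : C(D, A)) (g : C(E, B)) (j : C(A, B))
    {e₀ : E} {a₀ : A} {b₀ : B}
    (hge : g e₀ = b₀) (hja : j a₀ = b₀) (H : C(D × I, B))
    (h0 : ∀ d, H (d, 0) = g (i d)) (h1 : ∀ d, H (d, 1) = j (f d))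
    (x : HomotopyFibre (alphaMap i f g j hja H h0 h1) (HomotopyFibre.pt (⇑g) hge)) :
    HomotopyFibre (betaMap i f g j hge H h0 h1) (HomotopyFibre.pt (⇑j) hja) :=
  reindex (fun z => congrFun (alpha_swap i f g j hge H h0 h1) z)
    (Tmap f i j g hja hge (Hrev H) (Hrev_h0 i f g j H h1) (Hrev_h1 i f g j H h0)
      (reindex (fun z => (congrFun (beta_swap i f g j hja H h0 h1) z).symm) x))

lemma Tmap2_Tmap (i : C(D, E)) (f : C(D, A)) (g : C(E, B)) (j : C(A, B))
    {e₀ : E} {a₀ : A} {b₀ : B}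
    (hge : g e₀ = b₀) (hja : j a₀ = b₀) (H : C(D × I, B))
    (h0 : ∀ d, H (d, 0) = g (i d)) (h1 : ∀ d, H (d, 1) = j (f d))
    (x : HomotopyFibre (betaMap i f g j hge H h0 h1) (HomotopyFibre.pt (⇑j) hja)) :
    Tmap2 i f g j hge hja H h0 h1 (Tmap i f g j hge hja H h0 h1 x) = x := by
  apply Subtype.ext
  refine Prod.ext (Subtype.ext (Prod.ext rfl (ContinuousMap.ext fun u => rfl)))
    (ContinuousMap.ext fun t => Subtype.ext (Prod.ext rfl (ContinuousMap.ext fun v => ?_)))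
  show sqMap x.1.2 (phi (phi (t, v))) = (x.1.2 t).1.2 v
  rw [phi_invol]; rfl

lemma Tmap_Tmap2 (i : C(D, E)) (f : C(D, A)) (g : C(E, B)) (j : C(A, B))
    {e₀ : E} {a₀ : A} {b₀ : B}
    (hge : g e₀ = b₀) (hja : j a₀ = b₀) (H : C(D × I, B))
    (h0 : ∀ d, H (d, 0) = g (i d)) (h1 : ∀ d, H (d, 1) = j (f d))
    (x : HomotopyFibre (alphaMap i f g j hja H h0 h1) (HomotopyFibre.pt (⇑g) hge)) :
    Tmap i f g j hge hja H h0 h1 (Tmap2 i f g j hge hja H h0 h1 x) = x := by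
  apply Subtype.ext
  refine Prod.ext (Subtype.ext (Prod.ext rfl (ContinuousMap.ext fun u => rfl)))
    (ContinuousMap.ext fun t => Subtype.ext (Prod.ext rfl (ContinuousMap.ext fun v => ?_)))
  show sqMap x.1.2 (phi (phi (t, v))) = (x.1.2 t).1.2 v
  rw [phi_invol]; rfl

lemma alphaMap_pt (i : C(D, E)) (f : C(D, A)) (g : C(E, B)) (j : C(A, B))
    {d₀ : D} {e₀ : E} {a₀ : A} {b₀ : B}
    (hid : i d₀ = e₀) (hfd : f d₀ = a₀) (hge : g e₀ = b₀) (hja : j a₀ = b₀) (H : C(D × I, B))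
    (h0 : ∀ d, H (d, 0) = g (i d)) (h1 : ∀ d, H (d, 1) = j (f d))
    (hpt : ∀ t, H (d₀, t) = b₀) :
    alphaMap i f g j hja H h0 h1 (HomotopyFibre.pt (⇑f) hfd) = HomotopyFibre.pt (⇑g) hge := by
  apply Subtype.ext
  refine Prod.ext hid (ContinuousMap.ext fun t => ?_)
  rw [alphaMap_snd_apply]
  split_ifs with h
  · exact hja
  · exact hpt _

lemma betaMap_pt (i : C(D, E)) (f : C(D, A)) (g : C(E, B)) (j : C(A, B))
    {d₀ : D} {e₀ : E} {a₀ : A} {b₀ : B}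
    (hid : i d₀ = e₀) (hfd : f d₀ = a₀) (hge : g e₀ = b₀) (hja : j a₀ = b₀) (H : C(D × I, B))
    (h0 : ∀ d, H (d, 0) = g (i d)) (h1 : ∀ d, H (d, 1) = j (f d))
    (hpt : ∀ t, H (d₀, t) = b₀) :
    betaMap i f g j hge H h0 h1 (HomotopyFibre.pt (⇑i) hid) = HomotopyFibre.pt (⇑j) hja := by
  apply Subtype.ext
  refine Prod.ext hfd (ContinuousMap.ext fun t => ?_)
  rw [betaMap_snd_apply]
  split_ifs with h
  · exact hge
  · exact hpt _

lemma Tmap_pt (i : C(D, E)) (f : C(D, A)) (g : C(E, B)) (j : C(A, B))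
    {d₀ : D} {e₀ : E} {a₀ : A} {b₀ : B}
    (hid : i d₀ = e₀) (hfd : f d₀ = a₀) (hge : g e₀ = b₀) (hja : j a₀ = b₀) (H : C(D × I, B))
    (h0 : ∀ d, H (d, 0) = g (i d)) (h1 : ∀ d, H (d, 1) = j (f d))
    (hβ : betaMap i f g j hge H h0 h1 (HomotopyFibre.pt (⇑i) hid) = HomotopyFibre.pt (⇑j) hja)
    (hα : alphaMap i f g j hja H h0 h1 (HomotopyFibre.pt (⇑f) hfd) = HomotopyFibre.pt (⇑g) hge) :
    Tmap i f g j hge hja H h0 h1 (HomotopyFibre.pt (betaMap i f g j hge H h0 h1) hβ) =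
      HomotopyFibre.pt (alphaMap i f g j hja H h0 h1) hα := by
  apply Subtype.ext
  exact Prod.ext (Subtype.ext (Prod.ext rfl (ContinuousMap.ext fun u => rfl)))
    (ContinuousMap.ext fun t => Subtype.ext (Prod.ext rfl (ContinuousMap.ext fun v => rfl)))

lemma Tmap2_pt (i : C(D, E)) (f : C(D, A)) (g : C(E, B)) (j : C(A, B))
    {d₀ : D} {e₀ : E} {a₀ : A} {b₀ : B}
    (hid : i d₀ = e₀) (hfd : f d₀ = a₀) (hge : g e₀ = b₀) (hja : j a₀ = b₀) (H : C(D × I, B))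
    (h0 : ∀ d, H (d, 0) = g (i d)) (h1 : ∀ d, H (d, 1) = j (f d))
    (hβ : betaMap i f g j hge H h0 h1 (HomotopyFibre.pt (⇑i) hid) = HomotopyFibre.pt (⇑j) hja)
    (hα : alphaMap i f g j hja H h0 h1 (HomotopyFibre.pt (⇑f) hfd) = HomotopyFibre.pt (⇑g) hge) :
    Tmap2 i f g j hge hja H h0 h1 (HomotopyFibre.pt (alphaMap i f g j hja H h0 h1) hα) =
      HomotopyFibre.pt (betaMap i f g j hge H h0 h1) hβ := by
  apply Subtype.ext
  exact Prod.ext (Subtype.ext (Prod.ext rfl (ContinuousMap.ext fun u => rfl)))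
    (ContinuousMap.ext fun t => Subtype.ext (Prod.ext rfl (ContinuousMap.ext fun v => rfl)))

lemma reindex_continuous {X Y : Type} [TopologicalSpace X] [TopologicalSpace Y] {F G : X → Y}
    {y₀ : Y} (h : ∀ z, F z = G z) : Continuous (reindex (y₀ := y₀) h) :=
  Continuous.subtype_mk continuous_subtype_val _

lemma betaMap_continuous (i : C(D, E)) (f : C(D, A)) (g : C(E, B)) (j : C(A, B))
    {e₀ : E} {b₀ : B} (hge : g e₀ = b₀) (H : C(D × I, B))
    (h0 : ∀ d, H (d, 0) = g (i d)) (h1 : ∀ d, H (d, 1) = j (f d)) :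
    Continuous (betaMap i f g j hge H h0 h1) := by
  apply Continuous.subtype_mk
  apply Continuous.prodMk
  · exact f.continuous.comp (continuous_fst.comp continuous_subtype_val)
  · apply ContinuousMap.continuous_of_continuous_uncurry
    have hcont : Continuous fun p : HomotopyFibre (⇑i) e₀ × I =>
        if (p.2 : ℝ) ≤ 1/2 then g (p.1.1.2 (Set.projIcc 0 1 zero_le_one (2*(p.2:ℝ))))
        else H (p.1.1.1, Set.projIcc 0 1 zero_le_one (2*(p.2:ℝ)-1)) := by
      apply Continuous.if_le
      · exact g.continuous.comp ((continuous_snd.comp (continuous_subtype_val.comp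
          continuous_fst)).eval (continuous_projIcc.comp (by fun_prop)))
      · exact H.continuous.comp ((continuous_fst.comp (continuous_subtype_val.comp
          continuous_fst)).prodMk (continuous_projIcc.comp (by fun_prop)))
      · fun_prop
      · exact continuous_const
      · intro p hp
        have e1 : Set.projIcc (0:ℝ) 1 zero_le_one (2*(p.2:ℝ)) = 1 := by
          apply I_ext; rw [Set.coe_projIcc, hp]; norm_num
        have e2 : Set.projIcc (0:ℝ) 1 zero_le_one (2*(p.2:ℝ)-1) = 0 := by
          apply I_ext; rw [Set.coe_projIcc, hp]; norm_num
        rw [e1, e2, p.1.2.2, h0]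
    refine hcont.congr fun p => ?_
    show _ = (betaMap i f g j hge H h0 h1 p.1).1.2 p.2
    rw [betaMap_snd_apply]
    split_ifs with h
    · rw [Set.projIcc_of_mem zero_le_one ((mul_pos_mem_iff zero_lt_two).2 ⟨p.2.2.1, h⟩)]
    · rw [Set.projIcc_of_mem zero_le_one (two_mul_sub_one_mem_iff.2 ⟨(not_le.1 h).le, p.2.2.2⟩)]

lemma alphaMap_continuous (i : C(D, E)) (f : C(D, A)) (g : C(E, B)) (j : C(A, B))
    {a₀ : A} {b₀ : B} (hja : j a₀ = b₀) (H : C(D × I, B))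
    (h0 : ∀ d, H (d, 0) = g (i d)) (h1 : ∀ d, H (d, 1) = j (f d)) :
    Continuous (alphaMap i f g j hja H h0 h1) := by
  apply Continuous.subtype_mk
  apply Continuous.prodMk
  · exact i.continuous.comp (continuous_fst.comp continuous_subtype_val)
  · apply ContinuousMap.continuous_of_continuous_uncurry
    have hcont : Continuous fun p : HomotopyFibre (⇑f) a₀ × I =>
        if (p.2 : ℝ) ≤ 1/2 then j (p.1.1.2 (Set.projIcc 0 1 zero_le_one (2*(p.2:ℝ))))
        else H (p.1.1.1, σ (Set.projIcc 0 1 zero_le_one (2*(p.2:ℝ)-1))) := by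
      apply Continuous.if_le
      · exact j.continuous.comp ((continuous_snd.comp (continuous_subtype_val.comp
          continuous_fst)).eval (continuous_projIcc.comp (by fun_prop)))
      · exact H.continuous.comp ((continuous_fst.comp (continuous_subtype_val.comp
          continuous_fst)).prodMk (continuous_symm.comp
            (continuous_projIcc.comp (by fun_prop))))
      · fun_prop
      · exact continuous_const
      · intro p hp
        have e1 : Set.projIcc (0:ℝ) 1 zero_le_one (2*(p.2:ℝ)) = 1 := by
          apply I_ext; rw [Set.coe_projIcc, hp]; norm_num
        have e2 : σ (Set.projIcc (0:ℝ) 1 zero_le_one (2*(p.2:ℝ)-1)) = 1 := by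
          rw [show Set.projIcc (0:ℝ) 1 zero_le_one (2*(p.2:ℝ)-1) = 0 from by
            apply I_ext; rw [Set.coe_projIcc, hp]; norm_num, symm_zero]
        rw [e1, e2, p.1.2.2, h1]
    refine hcont.congr fun p => ?_
    show _ = (alphaMap i f g j hja H h0 h1 p.1).1.2 p.2
    rw [alphaMap_snd_apply]
    split_ifs with h
    · rw [Set.projIcc_of_mem zero_le_one ((mul_pos_mem_iff zero_lt_two).2 ⟨p.2.2.1, h⟩)]
    · rw [Set.projIcc_of_mem zero_le_one (two_mul_sub_one_mem_iff.2 ⟨(not_le.1 h).le, p.2.2.2⟩)]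

lemma Tmap_continuous (i : C(D, E)) (f : C(D, A)) (g : C(E, B)) (j : C(A, B))
    {e₀ : E} {a₀ : A} {b₀ : B}
    (hge : g e₀ = b₀) (hja : j a₀ = b₀) (H : C(D × I, B))
    (h0 : ∀ d, H (d, 0) = g (i d)) (h1 : ∀ d, H (d, 1) = j (f d)) :
    Continuous (Tmap i f g j hge hja H h0 h1) := by
  apply Continuous.subtype_mk
  apply Continuous.prodMk
  · apply Continuous.subtype_mk
    apply Continuous.prodMk
    · exact continuous_fst.comp (continuous_subtype_val.comp
        (continuous_fst.comp continuous_subtype_val))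
    · apply ContinuousMap.continuous_of_continuous_uncurry
      have hQ : Continuous fun p : HomotopyFibre (betaMap i f g j hge H h0 h1)
          (HomotopyFibre.pt (⇑j) hja) × I => p.1.1.2 :=
        continuous_snd.comp (continuous_subtype_val.comp continuous_fst)
      exact continuous_fst.comp (continuous_subtype_val.comp (hQ.eval continuous_snd))
  · apply ContinuousMap.continuous_of_continuous_uncurry
    apply Continuous.subtype_mk
    apply Continuous.prodMk
    · exact (continuous_snd.comp (continuous_subtype_val.comp (continuous_fst.comp
        (continuous_subtype_val.comp continuous_fst)))).eval continuous_snd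
    · apply ContinuousMap.continuous_of_continuous_uncurry
      show Continuous fun q : (HomotopyFibre (betaMap i f g j hge H h0 h1)
          (HomotopyFibre.pt (⇑j) hja) × I) × I => sqMap q.1.1.1.2 (phi (q.1.2, q.2))
      have hc : Continuous fun q : (HomotopyFibre (betaMap i f g j hge H h0 h1)
          (HomotopyFibre.pt (⇑j) hja) × I) × I => phi (q.1.2, q.2) :=
        phi.continuous.comp ((continuous_snd.comp continuous_fst).prodMk continuous_snd)
      have hQ : Continuous fun q : (HomotopyFibre (betaMap i f g j hge H h0 h1)
          (HomotopyFibre.pt (⇑j) hja) × I) × I => q.1.1.1.2 :=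
        continuous_snd.comp (continuous_subtype_val.comp (continuous_fst.comp continuous_fst))
      have h1 : Continuous fun q : (HomotopyFibre (betaMap i f g j hge H h0 h1)
          (HomotopyFibre.pt (⇑j) hja) × I) × I => q.1.1.1.2 ((phi (q.1.2, q.2)).1) :=
        hQ.eval (continuous_fst.comp hc)
      exact (continuous_snd.comp (continuous_subtype_val.comp h1)).eval
        (continuous_snd.comp hc)

lemma Tmap2_continuous (i : C(D, E)) (f : C(D, A)) (g : C(E, B)) (j : C(A, B))
    {e₀ : E} {a₀ : A} {b₀ : B}
    (hge : g e₀ = b₀) (hja : j a₀ = b₀) (H : C(D × I, B))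
    (h0 : ∀ d, H (d, 0) = g (i d)) (h1 : ∀ d, H (d, 1) = j (f d)) :
    Continuous (Tmap2 i f g j hge hja H h0 h1) := by
  unfold Tmap2
  exact (reindex_continuous _).comp
    ((Tmap_continuous f i j g hja hge (Hrev H) _ _).comp (reindex_continuous _))

end Stmt4Aux

/-- Given a pointed homotopy `H` from `g ∘ i` to `j ∘ f`, the maps
`α : Ff → Fg` and `β : Fi → Fj` defined via path concatenation with `H` are pointed
continuous maps, and for every `m ≥ 0` there is an isomorphism `π_m(Fβ) ≅ π_m(Fα)`
(a pointed bijection for `m = 0`, a group isomorphism for `m ≥ 1`). -/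
theorem stmt4 (i : C(D, E)) (f : C(D, A)) (g : C(E, B)) (j : C(A, B))
    (d₀ : D) (a₀ : A) (e₀ : E) (b₀ : B)
    (hid : i d₀ = e₀) (hfd : f d₀ = a₀) (hge : g e₀ = b₀) (hja : j a₀ = b₀)
    (H : C(D × I, B))
    (h0 : ∀ d, H (d, 0) = g (i d)) (h1 : ∀ d, H (d, 1) = j (f d))
    (hpt : ∀ t, H (d₀, t) = b₀) :
    Continuous (alphaMap i f g j hja H h0 h1) ∧
    Continuous (betaMap i f g j hge H h0 h1) ∧
    ∃ (hαpt : alphaMap i f g j hja H h0 h1 (HomotopyFibre.pt (⇑f) hfd) =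
        HomotopyFibre.pt (⇑g) hge)
      (hβpt : betaMap i f g j hge H h0 h1 (HomotopyFibre.pt (⇑i) hid) =
        HomotopyFibre.pt (⇑j) hja),
      (∀ m : ℕ,
        ∃ e : (π_ m) (HomotopyFibre (betaMap i f g j hge H h0 h1)
                (HomotopyFibre.pt (⇑j) hja))
              (HomotopyFibre.pt (betaMap i f g j hge H h0 h1) hβpt) ≃
            (π_ m) (HomotopyFibre (alphaMap i f g j hja H h0 h1)
                (HomotopyFibre.pt (⇑g) hge))
              (HomotopyFibre.pt (alphaMap i f g j hja H h0 h1) hαpt),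
          e ⟦GenLoop.const⟧ = ⟦GenLoop.const⟧) ∧
      (∀ m : ℕ,
        Nonempty
          ((π_ (m + 1)) (HomotopyFibre (betaMap i f g j hge H h0 h1)
                (HomotopyFibre.pt (⇑j) hja))
              (HomotopyFibre.pt (betaMap i f g j hge H h0 h1) hβpt) ≃*
            (π_ (m + 1)) (HomotopyFibre (alphaMap i f g j hja H h0 h1)
                (HomotopyFibre.pt (⇑g) hge))
              (HomotopyFibre.pt (alphaMap i f g j hja H h0 h1) hαpt))) := by
  have hαpt := Stmt4Aux.alphaMap_pt i f g j hid hfd hge hja H h0 h1 hpt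
  have hβpt := Stmt4Aux.betaMap_pt i f g j hid hfd hge hja H h0 h1 hpt
  refine ⟨Stmt4Aux.alphaMap_continuous i f g j hja H h0 h1,
    Stmt4Aux.betaMap_continuous i f g j hge H h0 h1, hαpt, hβpt, ?_, ?_⟩
  · intro m
    refine ⟨Stmt4Aux.piEquivOfMaps (N := Fin m)
      ⟨_, Stmt4Aux.Tmap_continuous i f g j hge hja H h0 h1⟩
      ⟨_, Stmt4Aux.Tmap2_continuous i f g j hge hja H h0 h1⟩
      (Stmt4Aux.Tmap_pt i f g j hid hfd hge hja H h0 h1 hβpt hαpt)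
      (Stmt4Aux.Tmap2_pt i f g j hid hfd hge hja H h0 h1 hβpt hαpt)
      (fun x => Stmt4Aux.Tmap2_Tmap i f g j hge hja H h0 h1 x)
      (fun x => Stmt4Aux.Tmap_Tmap2 i f g j hge hja H h0 h1 x), ?_⟩
    exact Stmt4Aux.piMap_const _ _
  · intro m
    exact ⟨MulEquiv.mk' (Stmt4Aux.piEquivOfMaps (N := Fin (m+1))
      ⟨_, Stmt4Aux.Tmap_continuous i f g j hge hja H h0 h1⟩
      ⟨_, Stmt4Aux.Tmap2_continuous i f g j hge hja H h0 h1⟩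
      (Stmt4Aux.Tmap_pt i f g j hid hfd hge hja H h0 h1 hβpt hαpt)
      (Stmt4Aux.Tmap2_pt i f g j hid hfd hge hja H h0 h1 hβpt hαpt)
      (fun x => Stmt4Aux.Tmap2_Tmap i f g j hge hja H h0 h1 x)
      (fun x => Stmt4Aux.Tmap_Tmap2 i f g j hge hja H h0 h1 x))
      (Stmt4Aux.piMap_mul _ _)⟩

end Maps
end

section
/- Let g : (E,e₀) → (B,b₀) be a pointed continuous map which is a Hurewicz fibration, and let j : (A,a₀) → (B,b₀) be a pointed continuous map, so that j(a₀) = b₀ = g(e₀). Let A ×_B E = {(a,e) ∈ A × E : j(a) = g(e)} be the fibre product with the subspace topology, pointed by (a₀,e₀), and let p_A : A ×_B E → A be the projection (a,e) ↦ a. Then there is a homotopy equivalence between the homotopy fibre F(p_A) of p_A and the homotopy fibre Fg of g. -/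
open unitInterval ContinuousMap

/-- A continuous map `g : E → B` is a Hurewicz fibration if it has the homotopy lifting
property with respect to every topological space. -/
def IsHurewiczFibration {E B : Type} [TopologicalSpace E] [TopologicalSpace B]
    (g : E → B) : Prop :=
  ∀ (T : Type) [TopologicalSpace T] (G : C(T × I, B)) (u : C(T, E)),
    (∀ t, g (u t) = G (t, 0)) →
      ∃ G' : C(T × I, E), (∀ t, G' (t, 0) = u t) ∧ ∀ z, g (G' z) = G z

/-- If `g : (E,e₀) → (B,b₀)` is a Hurewicz fibration and
`j : (A,a₀) → (B,b₀)` is a pointed continuous map, then the homotopy fibre of the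
projection `p_A : A ×_B E → A` of the fibre product is homotopy equivalent to the
homotopy fibre of `g`. -/
theorem stmt5 {A E B : Type} [TopologicalSpace A] [TopologicalSpace E] [TopologicalSpace B]
    (g : E → B) (hgc : Continuous g) (j : A → B) (hjc : Continuous j)
    (e₀ : E) (b₀ : B) (a₀ : A) (hg : g e₀ = b₀) (hj : j a₀ = b₀)
    (hfib : IsHurewiczFibration g) :
    Nonempty
      (HomotopyFibre (fun w : {w : A × E // j w.1 = g w.2} => w.1.1) a₀ ≃ₕ
        HomotopyFibre g b₀) := by

  set X := HomotopyFibre (fun w : {w : A × E // j w.1 = g w.2} => w.1.1) a₀ with hX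
  set Y := HomotopyFibre g b₀ with hY
  let jC : C(A, B) := ⟨j, hjc⟩
  have hmul : Continuous (fun p : I × I => p.1 * p.2) := by continuity
  -- the map φ : X → Y
  have hφc : Continuous (fun x : X => ((x.1.1.1.2 : E), jC.comp x.1.2)) := by
    refine Continuous.prodMk ?_ ?_
    · exact continuous_snd.comp ((continuous_subtype_val.comp
        (continuous_fst.comp continuous_subtype_val)))
    · exact (ContinuousMap.continuous_postcomp jC).comp
        (continuous_snd.comp continuous_subtype_val)
  have hφprf : ∀ x : X, (jC.comp x.1.2) 0 = b₀ ∧ (jC.comp x.1.2) 1 = g x.1.1.1.2 := by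
    intro x
    constructor
    · show j (x.1.2 0) = b₀; rw [x.2.1, hj]
    · show j (x.1.2 1) = g x.1.1.1.2; rw [x.2.2]; exact x.1.1.2
  let φ : C(X, Y) := ⟨fun x => ⟨(x.1.1.1.2, jC.comp x.1.2), hφprf x⟩,
    hφc.subtype_mk hφprf⟩
  -- the lifting data
  let G : C(Y × I, B) := ⟨fun zt => zt.1.1.2 (σ zt.2),
    continuous_eval.comp (Continuous.prodMk
      (continuous_snd.comp (continuous_subtype_val.comp continuous_fst))
      (continuous_symm.comp continuous_snd))⟩
  let u : C(Y, E) := ⟨fun z => z.1.1, continuous_fst.comp continuous_subtype_val⟩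
  obtain ⟨G', hG'0, hG'g⟩ := hfib Y G u (fun z => by
    show g z.1.1 = z.1.2 (σ 0)
    rw [symm_zero]; exact z.2.2.symm)
  -- the map ψ : Y → X
  have hψprf : ∀ z : Y, j a₀ = g (G' (z, 1)) := fun z => by
    rw [hG'g]; show j a₀ = z.1.2 (σ 1); rw [symm_one, z.2.1, hj]
  have hψc : Continuous (fun z : Y =>
      ((⟨(a₀, G' (z, 1)), hψprf z⟩ : {w : A × E // j w.1 = g w.2}),
        (ContinuousMap.const I a₀))) := by
    refine Continuous.prodMk (Continuous.subtype_mk ?_ _) continuous_const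
    exact Continuous.prodMk continuous_const
      (G'.continuous.comp (continuous_id.prodMk continuous_const))
  have hψprf2 : ∀ z : Y, (ContinuousMap.const I a₀) 0 = a₀ ∧
      (ContinuousMap.const I a₀) 1 = ((⟨(a₀, G' (z, 1)), hψprf z⟩ :
        {w : A × E // j w.1 = g w.2}) : A × E).1 := fun _ => ⟨rfl, rfl⟩
  let ψ : C(Y, X) := ⟨fun z => ⟨(⟨(a₀, G' (z, 1)), hψprf z⟩, ContinuousMap.const I a₀),
      hψprf2 z⟩, hψc.subtype_mk hψprf2⟩
  -- truncation family for Y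
  let FY : C((I × Y) × I, B) := ⟨fun q => q.1.2.1.2 (q.1.1 * q.2),
    continuous_eval.comp (Continuous.prodMk
      (continuous_snd.comp (continuous_subtype_val.comp (continuous_snd.comp continuous_fst)))
      (hmul.comp (Continuous.prodMk (continuous_fst.comp continuous_fst) continuous_snd)))⟩
  -- homotopy φ ∘ ψ ∼ id
  have hHYc : Continuous (fun p : I × Y => ((G' (p.2, σ p.1) : E), FY.curry p)) := by
    refine Continuous.prodMk ?_ FY.curry.continuous
    exact G'.continuous.comp (continuous_snd.prodMk (continuous_symm.comp continuous_fst))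
  have hHY1 : ∀ p : I × Y, (FY.curry p) 0 = b₀ := fun p => by
    show p.2.1.2 (p.1 * 0) = b₀
    rw [mul_zero]; exact p.2.2.1
  have hHY2 : ∀ p : I × Y, (FY.curry p) 1 = g (G' (p.2, σ p.1)) := fun p => by
    show p.2.1.2 (p.1 * 1) = g (G' (p.2, σ p.1))
    rw [mul_one, hG'g]; show _ = p.2.1.2 (σ (σ p.1)); rw [symm_symm]
  have right_inv : (φ.comp ψ).Homotopic (ContinuousMap.id Y) := by
    refine ⟨{ toFun := fun p => ⟨(G' (p.2, σ p.1), FY.curry p), ⟨hHY1 p, hHY2 p⟩⟩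
              continuous_toFun := hHYc.subtype_mk fun p => ⟨hHY1 p, hHY2 p⟩
              map_zero_left := ?_
              map_one_left := ?_ }⟩
    · intro z
      refine Subtype.ext (Prod.ext ?_ ?_)
      · show G' (z, σ 0) = G' (z, 1)
        rw [symm_zero]
      · refine ContinuousMap.ext fun t => ?_
        show z.1.2 (0 * t) = j a₀
        rw [zero_mul, z.2.1, hj]
    · intro z
      refine Subtype.ext (Prod.ext ?_ ?_)
      · show G' (z, σ 1) = z.1.1
        rw [symm_one]; exact hG'0 z
      · refine ContinuousMap.ext fun t => ?_
        show z.1.2 (1 * t) = z.1.2 t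
        rw [one_mul]
  -- truncation family for X
  let FX : C((I × X) × I, A) := ⟨fun q => q.1.2.1.2 (q.1.1 * q.2),
    continuous_eval.comp (Continuous.prodMk
      (continuous_snd.comp (continuous_subtype_val.comp (continuous_snd.comp continuous_fst)))
      (hmul.comp (Continuous.prodMk (continuous_fst.comp continuous_fst) continuous_snd)))⟩
  have hHXprf : ∀ p : I × X, j (p.2.1.2 p.1) = g (G' (φ p.2, σ p.1)) := fun p => by
    rw [hG'g]; show j (p.2.1.2 p.1) = (φ p.2 : Y).1.2 (σ (σ p.1))
    rw [symm_symm]; rfl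
  have hHXc : Continuous (fun p : I × X =>
      ((⟨(p.2.1.2 p.1, G' (φ p.2, σ p.1)), hHXprf p⟩ : {w : A × E // j w.1 = g w.2}),
        FX.curry p)) := by
    refine Continuous.prodMk (Continuous.subtype_mk ?_ _) FX.curry.continuous
    refine Continuous.prodMk ?_ ?_
    · exact continuous_eval.comp (Continuous.prodMk
        (continuous_snd.comp (continuous_subtype_val.comp continuous_snd)) continuous_fst)
    · exact G'.continuous.comp ((φ.continuous.comp continuous_snd).prodMk
        (continuous_symm.comp continuous_fst))
  have hHX1 : ∀ p : I × X, (FX.curry p) 0 = a₀ := fun p => by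
    show p.2.1.2 (p.1 * 0) = a₀
    rw [mul_zero]; exact p.2.2.1
  have hHX2 : ∀ p : I × X, (FX.curry p) 1 = p.2.1.2 p.1 := fun p => by
    show p.2.1.2 (p.1 * 1) = p.2.1.2 p.1
    rw [mul_one]
  have left_inv : (ψ.comp φ).Homotopic (ContinuousMap.id X) := by
    refine ⟨{ toFun := fun p => ⟨(⟨(p.2.1.2 p.1, G' (φ p.2, σ p.1)), hHXprf p⟩, FX.curry p),
                ⟨hHX1 p, hHX2 p⟩⟩
              continuous_toFun := hHXc.subtype_mk fun p => ⟨hHX1 p, hHX2 p⟩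
              map_zero_left := ?_
              map_one_left := ?_ }⟩
    · intro x
      refine Subtype.ext (Prod.ext (Subtype.ext (Prod.ext ?_ ?_)) ?_)
      · show x.1.2 0 = a₀; exact x.2.1
      · show G' (φ x, σ 0) = G' ((φ x : Y), 1); rw [symm_zero]
      · refine ContinuousMap.ext fun t => ?_
        show x.1.2 (0 * t) = a₀
        rw [zero_mul]; exact x.2.1
    · intro x
      refine Subtype.ext (Prod.ext (Subtype.ext (Prod.ext ?_ ?_)) ?_)
      · show x.1.2 1 = x.1.1.1.1; exact x.2.2
      · show G' (φ x, σ 1) = x.1.1.1.2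
        rw [symm_one]; exact hG'0 (φ x)
      · refine ContinuousMap.ext fun t => ?_
        show x.1.2 (1 * t) = x.1.2 t
        rw [one_mul]
  exact ⟨{ toFun := φ, invFun := ψ, left_inv := left_inv, right_inv := right_inv }⟩
end
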